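/- arXiv:2405.07971 — 5 statements merged into one kernel-verified Lean document; each statement's English description precedes it below -/
import Mathlib

section
/- If X and Y are independent random variables (with Y real-valued and non-degenerate), then the Cramér–von Mises index ξ(X,Y) equals 0. -/
open MeasureTheory ProbabilityTheory

/-- The Cramér–von Mises dependence index
`ξ(X,Y) = (∫ Var[E[1_{Y≤t} | X]] dP_Y(t)) / (∫ Var[1_{Y≤t}] dP_Y(t))`. -/
noncomputable def cvmIndex {Ω α : Type*} [MeasurableSpace Ω] [MeasurableSpace α]
    (μ : Measure Ω) (X : Ω → α) (Y : Ω → ℝ) : ℝ :=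
  (∫ t, variance (μ[(fun ω => if Y ω ≤ t then (1 : ℝ) else 0) |
      MeasurableSpace.comap X inferInstance]) μ ∂(μ.map Y)) /
  (∫ t, variance (fun ω => if Y ω ≤ t then (1 : ℝ) else 0) μ ∂(μ.map Y))

theorem variance_condExp_eq_zero_of_indep {Ω : Type*} {m₁ m₂ m : MeasurableSpace Ω}
    {μ : Measure Ω} [IsProbabilityMeasure μ] {f : Ω → ℝ} (hle₁ : m₁ ≤ m) (hle₂ : m₂ ≤ m)
    (hf : StronglyMeasurable[m₁] f) (hindep : Indep m₁ m₂ μ) :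
    Var[μ[f | m₂]; μ] = 0 := by
  rw [variance_congr (condExp_indep_eq hle₁ hle₂ hf hindep)]
  simp [variance_eq_integral]

theorem stronglyMeasurable_comap_ite_le {Ω : Type*} (Y : Ω → ℝ) (t : ℝ) :
    StronglyMeasurable[MeasurableSpace.comap Y inferInstance]
      (fun ω => if Y ω ≤ t then (1 : ℝ) else 0) :=
  (Measurable.ite (measurableSet_Iic.preimage (comap_measurable Y))
    measurable_const measurable_const).stronglyMeasurable

theorem cvmIndex_eq_zero_of_indepFun_general {Ω α : Type*} [MeasurableSpace Ω] [MeasurableSpace α]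
    (μ : Measure Ω) [IsProbabilityMeasure μ] (X : Ω → α) (Y : Ω → ℝ)
    (hX : Measurable X) (hY : Measurable Y)
    (hindep : IndepFun X Y μ) :
    cvmIndex μ X Y = 0 := by
  have hnum : ∀ t : ℝ, Var[μ[(fun ω => if Y ω ≤ t then (1 : ℝ) else 0) |
      MeasurableSpace.comap X inferInstance]; μ] = 0 := fun t =>
    variance_condExp_eq_zero_of_indep hY.comap_le hX.comap_le
      (stronglyMeasurable_comap_ite_le Y t) hindep.symm
  simp [cvmIndex, hnum]

/-- if `X` and `Y` are independent (with `Y` real-valued and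
non-degenerate, so the denominator is positive), then `ξ(X,Y) = 0`. -/
theorem cvmIndex_eq_zero_of_indepFun {Ω α : Type*} [MeasurableSpace Ω] [MeasurableSpace α]
    (μ : Measure Ω) [IsProbabilityMeasure μ] (X : Ω → α) (Y : Ω → ℝ)
    (hX : Measurable X) (hY : Measurable Y)
    (hden : 0 < ∫ t, variance (fun ω => if Y ω ≤ t then (1 : ℝ) else 0) μ ∂(μ.map Y))
    (hindep : IndepFun X Y μ) :
    cvmIndex μ X Y = 0 :=
  cvmIndex_eq_zero_of_indepFun_general μ X Y hX hY hindep
end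

section
/- If ξ(X,Y) = 0, then X and Y are independent. -/
open MeasureTheory ProbabilityTheory Set

theorem MeasureTheory.Measure.ext_of_ae_Iic {α : Type*} [ConditionallyCompleteLinearOrder α]
    [TopologicalSpace α] [OrderTopology α] [SecondCountableTopology α] [MeasurableSpace α]
    [BorelSpace α] {P ν₁ ν₂ : Measure α} [IsFiniteMeasure ν₁] (h₁ : ν₁ ≪ P) (h₂ : ν₂ ≪ P)
    (h : ∀ᵐ t ∂P, ν₁ (Iic t) = ν₂ (Iic t)) : ν₁ = ν₂ := by
  set S := {t | ν₁ (Iic t) = ν₂ (Iic t)}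
  have hS : P Sᶜ = 0 := h
  have eq_of_subset (t : α) (U : Set α) (hU : U ⊆ Iic t) (hdiff : Iic t \ U ⊆ Sᶜ)
      (hνU : ν₁ U = ν₂ U) : ν₁ (Iic t) = ν₂ (Iic t) := by
    rwa [← measure_sdiff_null (h₁ (measure_mono_null hdiff hS)),
      ← measure_sdiff_null (h₂ (measure_mono_null hdiff hS)), sdiff_sdiff_cancel_left hU]
  refine ext_of_Iic _ _ fun t => ?_
  by_cases hT : (S ∩ Iic t).Nonempty
  swap
  · exact eq_of_subset t ∅ (empty_subset _) (fun x hx hxS => hT ⟨x, hxS, hx.1⟩) (by simp)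
  have hbdd : BddAbove (S ∩ Iic t) := ⟨t, fun _ hx => hx.2⟩
  set b := sSup (S ∩ Iic t)
  have hle_b : ∀ x ∈ S ∩ Iic t, x ≤ b := fun x hx => le_csSup hbdd hx
  by_cases hb : b ∈ S
  · refine eq_of_subset t (Iic b) (Iic_subset_Iic.2 (csSup_le hT fun _ hx => hx.2)) ?_ hb
    rintro x ⟨hxt, hxb⟩ hxS
    exact hxb (hle_b x ⟨hxS, hxt⟩)
  -- As `b ∉ S`, `b` is not an atom of `P`, so `Iic t` is the union of the `Iic (v n)` up to a
  -- `P`-null set.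
  obtain ⟨v, hv_mono, hv_lim, hv_mem⟩ := exists_seq_tendsto_sSup hT hbdd
  refine eq_of_subset t (⋃ n, Iic (v n)) (iUnion_subset fun n => Iic_subset_Iic.2 (hv_mem n).2)
    ?_ ?_
  · rintro x ⟨hxt, hxv⟩ hxS
    simp only [mem_iUnion, mem_Iic, not_exists, not_le] at hxv
    have hbx : b ≤ x := le_of_tendsto' hv_lim fun n => (hxv n).le
    exact hb (le_antisymm hbx (hle_b x ⟨hxS, hxt⟩) ▸ hxS)
  · have hmono : Monotone fun n => Iic (v n) := fun m n hmn => Iic_subset_Iic.2 (hv_mono hmn)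
    rw [hmono.measure_iUnion, hmono.measure_iUnion]
    exact iSup_congr fun n => (hv_mem n).1

section

variable {Ω : Type*} {m mΩ : MeasurableSpace Ω} {μ : Measure Ω} {A s : Set Ω}

lemma condExp_indicator_one_mem_Icc [IsFiniteMeasure μ] (hm : m ≤ mΩ) (hA : MeasurableSet A) :
    ∀ᵐ ω ∂μ, μ[A.indicator 1 | m] ω ∈ Icc (0 : ℝ) 1 := by
  have hint : Integrable (A.indicator (1 : Ω → ℝ)) μ := (integrable_const 1).indicator hA
  have hle : μ[A.indicator 1 | m] ≤ᵐ[μ] μ[fun _ => (1 : ℝ) | m] :=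
    condExp_mono hint (integrable_const 1)
      (ae_of_all _ (indicator_le_self' fun _ _ => zero_le_one' ℝ))
  rw [condExp_const hm] at hle
  have hnonneg : 0 ≤ᵐ[μ] μ[A.indicator 1 | m] :=
    condExp_nonneg (ae_of_all μ (indicator_nonneg fun _ _ => zero_le_one' ℝ))
  filter_upwards [hnonneg, hle] with ω h0 h1
  exact ⟨h0, h1⟩

lemma memLp_condExp_indicator_one [IsFiniteMeasure μ] (hm : m ≤ mΩ) (hA : MeasurableSet A) :
    MemLp (μ[A.indicator (1 : Ω → ℝ) | m]) 2 μ :=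
  memLp_of_bounded (condExp_indicator_one_mem_Icc hm hA)
    (stronglyMeasurable_condExp.mono hm).aestronglyMeasurable 2

lemma measure_inter_eq_mul_of_variance_condExp_indicator_eq_zero [IsProbabilityMeasure μ]
    (hm : m ≤ mΩ) (hA : MeasurableSet A) (h : Var[μ[A.indicator 1 | m]; μ] = 0)
    (hs : MeasurableSet[m] s) : μ (s ∩ A) = μ s * μ A := by
  have hconst := ae_eq_integral_of_variance_eq_zero (memLp_condExp_indicator_one hm hA) h
  rw [integral_condExp hm, integral_indicator_one hA] at hconst
  have hreal : μ.real (s ∩ A) = μ.real s * μ.real A := calc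
    μ.real (s ∩ A) = ∫ ω in s, A.indicator 1 ω ∂μ := by
      rw [integral_indicator_one hA, measureReal_restrict_apply hA, inter_comm]
    _ = ∫ ω in s, μ[A.indicator 1 | m] ω ∂μ :=
      (setIntegral_condExp hm ((integrable_const 1).indicator hA) hs).symm
    _ = ∫ _ in s, μ.real A ∂μ := integral_congr_ae (ae_restrict_of_ae hconst)
    _ = μ.real s * μ.real A := by simp
  rw [measureReal_def, measureReal_def, measureReal_def, ← ENNReal.toReal_mul] at hreal
  exact (ENNReal.toReal_eq_toReal_iff' (by finiteness) (by finiteness)).mp hreal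

theorem integrable_variance_condExp_indicator_Iic {α : Type*} [LinearOrder α]
    [TopologicalSpace α] [OrderClosedTopology α] [MeasurableSpace α] [BorelSpace α] {Y : Ω → α}
    [IsProbabilityMeasure μ] (hm : m ≤ mΩ) (hY : Measurable Y) (P : Measure α)
    [IsFiniteMeasure P] :
    Integrable (fun t => Var[μ[(Y ⁻¹' Iic t).indicator 1 | m]; μ]) P := by
  set k : α → Ω → ℝ := fun t => μ[(Y ⁻¹' Iic t).indicator 1 | m]
  have hbdd t : ∀ᵐ ω ∂μ, k t ω ∈ Icc 0 1 :=
    condExp_indicator_one_mem_Icc hm (hY measurableSet_Iic)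
  have hL2 t : MemLp (k t) 2 μ := memLp_condExp_indicator_one hm (hY measurableSet_Iic)
  have hmono {s t : α} (hst : s ≤ t) : k s ≤ᵐ[μ] k t :=
    condExp_mono ((integrable_const 1).indicator (hY measurableSet_Iic))
      ((integrable_const 1).indicator (hY measurableSet_Iic))
      (ae_of_all _ (indicator_le_indicator_of_subset (preimage_mono (Iic_subset_Iic.2 hst))
        fun _ => zero_le_one' ℝ))
  have hmeas : Measurable fun t => Var[k t; μ] := by
    simp_rw [variance_eq_sub (hL2 _)]
    refine Monotone.measurable (fun s t hst => integral_mono_ae (hL2 s).integrable_sq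
      (hL2 t).integrable_sq ?_) |>.sub ((Monotone.measurable fun s t hst =>
        integral_mono_ae ((hL2 s).integrable one_le_two) ((hL2 t).integrable one_le_two)
          (hmono hst)).pow_const 2)
    filter_upwards [hmono hst, hbdd s] with ω hω hω₀
    exact pow_le_pow_left₀ hω₀.1 hω 2
  refine Integrable.of_bound hmeas.aestronglyMeasurable 1 (ae_of_all _ fun t => ?_)
  rw [Real.norm_of_nonneg (variance_nonneg _ _)]
  exact (variance_le_sq_of_bounded (hbdd t) (hL2 t).aestronglyMeasurable.aemeasurable).trans
    (by norm_num)

variable {α : Type*} [ConditionallyCompleteLinearOrder α] [TopologicalSpace α] [OrderTopology α]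
  [SecondCountableTopology α] [MeasurableSpace α] [BorelSpace α] {Y : Ω → α}

theorem indep_comap_of_ae_measure_inter_preimage_Iic [IsFiniteMeasure μ] (hY : Measurable Y)
    (h : ∀ᵐ t ∂μ.map Y, ∀ s, MeasurableSet[m] s →
      μ (s ∩ Y ⁻¹' Iic t) = μ s * μ (Y ⁻¹' Iic t)) :
    Indep m (MeasurableSpace.comap Y ‹_›) μ := by
  rw [Indep_iff]
  rintro s _ hs ⟨B, hB, rfl⟩
  have hlaw : (μ.restrict s).map Y = μ s • μ.map Y := by
    refine Measure.ext_of_ae_Iic (Measure.restrict_le_self.absolutelyContinuous.map hY)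
      Measure.smul_absolutelyContinuous ?_
    filter_upwards [h] with t ht
    rw [Measure.map_apply hY measurableSet_Iic, Measure.restrict_apply (hY measurableSet_Iic),
      Measure.smul_apply, Measure.map_apply hY measurableSet_Iic, inter_comm, ht s hs, smul_eq_mul]
  have hlaw_B := congr($hlaw B)
  rwa [Measure.map_apply hY hB, Measure.restrict_apply (hY hB), Measure.smul_apply,
    Measure.map_apply hY hB, smul_eq_mul, inter_comm] at hlaw_B

theorem indep_comap_of_integral_variance_condExp_indicator_Iic_eq_zero [IsProbabilityMeasure μ]
    (hm : m ≤ mΩ) (hY : Measurable Y)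
    (h : ∫ t, Var[μ[(Y ⁻¹' Iic t).indicator 1 | m]; μ] ∂μ.map Y = 0) :
    Indep m (MeasurableSpace.comap Y ‹_›) μ := by
  have hvar := (integral_eq_zero_iff_of_nonneg (fun t => variance_nonneg _ _)
    (integrable_variance_condExp_indicator_Iic hm hY _)).mp h
  refine indep_comap_of_ae_measure_inter_preimage_Iic hY ?_
  filter_upwards [hvar] with t ht s hs
  exact measure_inter_eq_mul_of_variance_condExp_indicator_eq_zero hm (hY measurableSet_Iic) ht hs

end

/-- if `ξ(X,Y) = 0` then `X` and `Y` are independent. -/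
theorem indepFun_of_cvmIndex_eq_zero {Ω α : Type*} [MeasurableSpace Ω] [MeasurableSpace α]
    (μ : Measure Ω) [IsProbabilityMeasure μ] (X : Ω → α) (Y : Ω → ℝ)
    (hX : Measurable X) (hY : Measurable Y)
    (hden : 0 < ∫ t, variance (fun ω => if Y ω ≤ t then (1 : ℝ) else 0) μ ∂(μ.map Y))
    (hxi : cvmIndex μ X Y = 0) :
    IndepFun X Y μ := by
  have hindicator (t : ℝ) :
      (fun ω => if Y ω ≤ t then (1 : ℝ) else 0) = (Y ⁻¹' Iic t).indicator 1 := by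
    ext ω
    by_cases h : Y ω ≤ t <;> simp [h]
  have hnum := (div_eq_zero_iff.mp hxi).resolve_right hden.ne'
  simp only [hindicator] at hnum
  rw [IndepFun_iff_Indep]
  exact indep_comap_of_integral_variance_condExp_indicator_Iic_eq_zero hX.comap_le hY hnum
end

section
/- If Y is a measurable function of X, i.e. Y = f(X) almost surely for some measurable f, and Y is non-degenerate, then ξ(X,Y) = 1. -/
open MeasureTheory ProbabilityTheory

lemma variance_congr_ae {Ω : Type*} [MeasurableSpace Ω] {μ : Measure Ω} {f g : Ω → ℝ}
    (h : f =ᵐ[μ] g) : variance f μ = variance g μ := by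
  unfold ProbabilityTheory.variance ProbabilityTheory.evariance
  rw [integral_congr_ae h]
  congr 1
  refine lintegral_congr_ae ?_
  filter_upwards [h] with ω hω
  rw [hω]

/-- if `Y = f(X)` almost surely for some measurable `f`, and `Y` is
non-degenerate (positive denominator), then `ξ(X,Y) = 1`. -/
theorem cvmIndex_eq_one_of_function {Ω α : Type*} [MeasurableSpace Ω] [MeasurableSpace α]
    (μ : Measure Ω) [IsProbabilityMeasure μ] (X : Ω → α) (Y : Ω → ℝ)
    (hX : Measurable X) (hY : Measurable Y)
    (hden : 0 < ∫ t, variance (fun ω => if Y ω ≤ t then (1 : ℝ) else 0) μ ∂(μ.map Y))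
    (hfun : ∃ f : α → ℝ, Measurable f ∧ Y =ᵐ[μ] fun ω => f (X ω)) :
    cvmIndex μ X Y = 1 := by
  obtain ⟨f, hf, hae⟩ := hfun
  have hm : MeasurableSpace.comap X (inferInstance : MeasurableSpace α)
      ≤ (inferInstance : MeasurableSpace Ω) := hX.comap_le
  haveI : SigmaFinite (μ.trim hm) := by
    have : IsFiniteMeasure (μ.trim hm) := isFiniteMeasure_trim hm
    infer_instance
  have key : ∀ t : ℝ,
      variance (μ[(fun ω => if Y ω ≤ t then (1 : ℝ) else 0) | MeasurableSpace.comap X inferInstance]) μ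
        = variance (fun ω => if Y ω ≤ t then (1 : ℝ) else 0) μ := by
    intro t
    set g : Ω → ℝ := fun ω => if f (X ω) ≤ t then (1 : ℝ) else 0 with hg_def
    have hgm : StronglyMeasurable[MeasurableSpace.comap X inferInstance] g := by
      have hXm : Measurable[MeasurableSpace.comap X inferInstance] X := fun s hs => ⟨s, hs, rfl⟩
      have : Measurable[MeasurableSpace.comap X inferInstance] g := by
        exact Measurable.ite ((hf.comp hXm) measurableSet_Iic) measurable_const measurable_const
      exact this.stronglyMeasurable
    have hgi : Integrable g μ := by
      have hset : MeasurableSet {ω | f (X ω) ≤ t} := (hf.comp hX) measurableSet_Iic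
      have : g = Set.indicator {ω | f (X ω) ≤ t} (fun _ => (1 : ℝ)) := by
        funext ω; simp [hg_def, Set.indicator_apply, Set.mem_setOf_eq]
      rw [this]
      exact (integrable_const (1 : ℝ)).indicator hset
    have haeg : (fun ω => if Y ω ≤ t then (1 : ℝ) else 0) =ᵐ[μ] g := by
      filter_upwards [hae] with ω hω
      simp [hg_def, hω]
    have h1 : μ[(fun ω => if Y ω ≤ t then (1 : ℝ) else 0) | MeasurableSpace.comap X inferInstance] =ᵐ[μ] g := by
      calc μ[(fun ω => if Y ω ≤ t then (1 : ℝ) else 0) | MeasurableSpace.comap X inferInstance]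
          =ᵐ[μ] μ[g | MeasurableSpace.comap X inferInstance] := condExp_congr_ae haeg
        _ = g := condExp_of_stronglyMeasurable hm hgm hgi
    exact variance_congr_ae (h1.trans haeg.symm)
  unfold cvmIndex
  rw [show (∫ t, variance (μ[(fun ω => if Y ω ≤ t then (1 : ℝ) else 0) | MeasurableSpace.comap X inferInstance]) μ ∂(μ.map Y))
      = ∫ t, variance (fun ω => if Y ω ≤ t then (1 : ℝ) else 0) μ ∂(μ.map Y) from
      integral_congr_ae (Filter.Eventually.of_forall key)]
  exact div_self (ne_of_gt hden)
end

section
/- If ξ(X,Y) = 1, then Y is almost surely equal to a σ(X)-measurable random variable. -/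
/-!
By the law of total variance, `Var 1_{Y≤t} - Var E[1_{Y≤t} | X] = E[(1_{Y≤t} - E[1_{Y≤t} | X])²]`,
so `ξ = 1` forces `1_{Y≤t} = E[1_{Y≤t} | X]` a.s. for `P_Y`-a.e. `t`: the events `{Y ≤ t}` are
a.e. `σ(X)`-measurable for `t` in a set `S` carrying the law of `Y`. A countable `G ⊆ S`, dense
in `S` and containing the points of `S` isolated from the right, satisfies
`y = inf (G ∩ [y, ∞))` for every `y ∈ S`; hence `Y = inf {t ∈ G | Y ≤ t}` a.s. is a.e.
`σ(X)`-measurable.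
-/

open MeasureTheory ProbabilityTheory

open Set Filter Topology

theorem exists_countable_subset_forall_isGLB_inter_Ici {α : Type*} [LinearOrder α]
    [TopologicalSpace α] [OrderTopology α] [SecondCountableTopology α] (S : Set α) :
    ∃ G ⊆ S, G.Countable ∧ ∀ y ∈ S, IsGLB (G ∩ Ici y) y := by
  obtain ⟨D, hDS, hD, hSD⟩ :=
    (TopologicalSpace.IsSeparable.of_separableSpace S).exists_countable_dense_subset
  refine ⟨D ∪ {x ∈ S | 𝓝[S ∩ Ioi x] x = ⊥}, union_subset hDS (sep_subset _ _),
    hD.union countable_setOfPred_isolated_right_within, fun y hy => ⟨fun _ ht => ht.2, ?_⟩⟩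
  intro b hb
  by_contra! hyb
  by_cases hiso : 𝓝[S ∩ Ioi y] y = ⊥
  · exact hyb.not_ge (hb ⟨Or.inr ⟨hy, hiso⟩, le_rfl⟩)
  have : NeBot (𝓝[S ∩ Ioi y] y) := ⟨hiso⟩
  obtain ⟨x, hxb, hxS, hyx⟩ : (Iio b ∩ (S ∩ Ioi y)).Nonempty :=
    nonempty_of_mem (inter_mem (mem_nhdsWithin_of_mem_nhds (Iio_mem_nhds hyb))
      self_mem_nhdsWithin)
  obtain ⟨d, ⟨hyd, hdb⟩, hdD⟩ :=
    mem_closure_iff.1 (hSD hxS) (Ioo y b) isOpen_Ioo ⟨hyx, hxb⟩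
  exact hdb.not_ge (hb ⟨Or.inl hdD, hyd.le⟩)

theorem EReal.biInf_coe_eq_of_isGLB {s : Set ℝ} {y : ℝ} (hy : IsGLB s y) :
    ⨅ t ∈ s, (t : EReal) = y := by
  refine le_antisymm ?_ (le_iInf₂ fun t ht => EReal.coe_le_coe_iff.2 (hy.1 ht))
  by_contra! hlt
  obtain ⟨r, hyr, hr⟩ := EReal.lt_iff_exists_real_btwn.1 hlt
  have hrs : r ∈ lowerBounds s := fun t ht =>
    EReal.coe_le_coe_iff.1 (hr.le.trans (iInf₂_le t ht))
  exact (EReal.coe_lt_coe_iff.1 hyr).not_ge (hy.2 hrs)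

theorem exists_measurable_ae_eq_of_setOf_le_ae_eq {Ω : Type*} {m m₀ : MeasurableSpace Ω}
    {μ : Measure[m₀] Ω} {Y : Ω → ℝ} {S : Set ℝ} (hYS : ∀ᵐ ω ∂μ, Y ω ∈ S)
    (hS : ∀ t ∈ S, ∃ A, MeasurableSet[m] A ∧ {ω | Y ω ≤ t} =ᵐ[μ] A) :
    ∃ Z : Ω → ℝ, Measurable[m] Z ∧ Y =ᵐ[μ] Z := by
  classical
  obtain ⟨G, hGS, hG, hGLB⟩ := exists_countable_subset_forall_isGLB_inter_Ici S
  choose! A hAm hYA using hS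
  refine ⟨fun ω => (⨅ t ∈ G, if ω ∈ A t then (t : EReal) else ⊤).toReal,
    measurable_ereal_toReal.comp (Measurable.biInf G hG fun t ht =>
      Measurable.ite (hAm t (hGS ht)) measurable_const measurable_const), ?_⟩
  filter_upwards [hYS, (ae_ball_iff hG).2 fun t ht => eventuallyEq_set.1 (hYA t (hGS ht))]
    with ω hωS hωA
  have hinf : ⨅ t ∈ G, (if ω ∈ A t then (t : EReal) else ⊤) =
      ⨅ t ∈ G ∩ Ici (Y ω), (t : EReal) := by
    simp only [mem_inter_iff, iInf_and, mem_Ici]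
    refine iInf_congr fun t => iInf_congr fun ht => ?_
    rw [← hωA t ht, iInf_eq_if]
  simp only [hinf, EReal.biInf_coe_eq_of_isGLB (hGLB _ hωS), EReal.toReal_coe]

theorem exists_measurableSet_ae_eq_of_ite_ae_eq {Ω : Type*} {m m₀ : MeasurableSpace Ω}
    {μ : Measure[m₀] Ω} {p : Ω → Prop} [DecidablePred p] {g : Ω → ℝ}
    (hg : StronglyMeasurable[m] g) (h : (fun ω => if p ω then (1 : ℝ) else 0) =ᵐ[μ] g) :
    ∃ A, MeasurableSet[m] A ∧ {ω | p ω} =ᵐ[μ] A := by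
  refine ⟨g ⁻¹' {1}, hg.measurable (MeasurableSet.singleton 1), eventuallyEq_set.2 ?_⟩
  filter_upwards [h] with ω hω
  by_cases hp : p ω <;> simp [hp, ← hω]

section Variance

variable {Ω : Type*} {m m₀ : MeasurableSpace Ω} {μ : Measure[m₀] Ω} [IsProbabilityMeasure μ]
  {X : Ω → ℝ}

theorem integral_sq_sub_condExp_add_variance_condExp (hm : m ≤ m₀) (hX : MemLp X 2 μ) :
    ∫ ω, (X ω - μ[X|m] ω) ^ 2 ∂μ + variance (μ[X|m]) μ = variance X μ := by
  rw [← integral_condVar_add_variance_condExp hm hX, condVar, integral_condExp hm]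
  rfl

theorem variance_condExp_le (hm : m ≤ m₀) (hX : MemLp X 2 μ) :
    variance (μ[X|m]) μ ≤ variance X μ := by
  rw [← integral_sq_sub_condExp_add_variance_condExp hm hX]
  exact le_add_of_nonneg_left (integral_nonneg fun ω => sq_nonneg _)

theorem ae_eq_condExp_of_variance_condExp_eq (hm : m ≤ m₀) (hX : MemLp X 2 μ)
    (h : variance (μ[X|m]) μ = variance X μ) : X =ᵐ[μ] μ[X|m] := by
  rw [← integral_sq_sub_condExp_add_variance_condExp hm hX, right_eq_add] at h
  have hint : Integrable (fun ω => (X ω - μ[X|m] ω) ^ 2) μ :=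
    (hX.sub (hX.condExp one_le_two)).integrable_sq
  filter_upwards [(integral_eq_zero_iff_of_nonneg (fun ω => sq_nonneg _) hint).1 h] with ω hω
  exact sub_eq_zero.1 (pow_eq_zero_iff two_ne_zero |>.1 hω)

end Variance

/-- A nonzero Bochner integral certifies integrability, as `∫ f = 0` for non-integrable `f`. -/
theorem ae_eq_of_ae_le_of_integral_eq_of_ne_zero {α : Type*} {mα : MeasurableSpace α}
    {ν : Measure α} {f g : α → ℝ} (hgf : g ≤ᵐ[ν] f) (h : ∫ a, g a ∂ν = ∫ a, f a ∂ν)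
    (hf : ∫ a, f a ∂ν ≠ 0) : g =ᵐ[ν] f :=
  (integral_eq_iff_of_ae_le (.of_integral_ne_zero (h ▸ hf)) (.of_integral_ne_zero hf) hgf).1 h

theorem ae_eq_sigma_measurable_of_cvmIndex_eq_one_general {Ω α : Type*} [MeasurableSpace Ω]
    [MeasurableSpace α]
    (μ : Measure Ω) [IsProbabilityMeasure μ] (X : Ω → α) (Y : Ω → ℝ)
    (hX : Measurable X) (hY : Measurable Y)
    (hxi : cvmIndex μ X Y = 1) :
    ∃ Z : Ω → ℝ, Measurable[MeasurableSpace.comap X inferInstance] Z ∧ Y =ᵐ[μ] Z := by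
  set f : ℝ → Ω → ℝ := fun t ω => if Y ω ≤ t then 1 else 0
  have hm : MeasurableSpace.comap X inferInstance ≤ ‹MeasurableSpace Ω› := hX.comap_le
  have hf : ∀ t, MemLp (f t) 2 μ := fun t =>
    .of_bound (Measurable.ite (measurableSet_le hY measurable_const) measurable_const
      measurable_const).aestronglyMeasurable 1
      (ae_of_all _ fun ω => by unfold f; split_ifs <;> simp)
  -- `x / 0 = 0`, so `ξ = 1` already rules out a vanishing denominator.
  have hden : ∫ t, variance (f t) μ ∂(μ.map Y) ≠ 0 := fun h => by simp [cvmIndex, f, h] at hxi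
  have hvar : ∀ᵐ t ∂(μ.map Y),
      variance (μ[f t|MeasurableSpace.comap X inferInstance]) μ = variance (f t) μ :=
    ae_eq_of_ae_le_of_integral_eq_of_ne_zero
      (ae_of_all _ fun t => variance_condExp_le hm (hf t)) ((div_eq_one_iff_eq hden).1 hxi) hden
  have hsub : ∀ᵐ t ∂(μ.map Y),
      ∃ A, MeasurableSet[MeasurableSpace.comap X inferInstance] A ∧ {ω | Y ω ≤ t} =ᵐ[μ] A := by
    filter_upwards [hvar] with t ht
    exact exists_measurableSet_ae_eq_of_ite_ae_eq stronglyMeasurable_condExp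
      (ae_eq_condExp_of_variance_condExp_eq hm (hf t) ht)
  exact exists_measurable_ae_eq_of_setOf_le_ae_eq (ae_of_ae_map hY.aemeasurable hsub)
    fun _ ht => ht

/-- if `ξ(X,Y) = 1` then `Y` is almost surely equal to a
`σ(X)`-measurable random variable. -/
theorem ae_eq_sigma_measurable_of_cvmIndex_eq_one {Ω α : Type*} [MeasurableSpace Ω]
    [MeasurableSpace α]
    (μ : Measure Ω) [IsProbabilityMeasure μ] (X : Ω → α) (Y : Ω → ℝ)
    (hX : Measurable X) (hY : Measurable Y)
    (hden : 0 < ∫ t, variance (fun ω => if Y ω ≤ t then (1 : ℝ) else 0) μ ∂(μ.map Y))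
    (hxi : cvmIndex μ X Y = 1) :
    ∃ Z : Ω → ℝ, Measurable[MeasurableSpace.comap X inferInstance] Z ∧ Y =ᵐ[μ] Z :=
  ae_eq_sigma_measurable_of_cvmIndex_eq_one_general μ X Y hX hY hxi
end

section
/- For any permutation (r_1,...,r_N) of (1,...,N) with N ≥ 2, the sum Σ_{j=1}^{N−1} |r_{j+1} − r_j| is at least N−1 and at most ⌊N²/2⌋ − 1; consequently Chatterjee's statistic ξ̂_N = 1 − 3 Σ |r_{j+1}−r_j| / (N²−1) lies in the interval [1 − 3(⌊N²/2⌋−1)/(N²−1), (N−2)/(N+1)]. -/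
/-- Chatterjee's rank statistic
`ξ̂_N = 1 − 3 Σ_{j=1}^{N−1} |r_{j+1} − r_j| / (N² − 1)`, where `r 0, …, r (N-1)`
are the ranks of the `y`-values after sorting by `x`. -/
noncomputable def chatterjee (N : ℕ) (r : ℕ → ℤ) : ℝ :=
  1 - 3 * ((∑ j ∈ Finset.range (N - 1), |r (j + 1) - r j| : ℤ) : ℝ) / ((N : ℝ) ^ 2 - 1)

/-- `∑_{k∈range n} |2(k+1) - (n+1)| = ⌊n²/2⌋`. -/
lemma chatterjee_keySum : ∀ n : ℕ,
    ∑ k ∈ Finset.range n, |2*((k:ℤ)+1) - ((n:ℤ)+1)| = ((n^2/2 : ℕ) : ℤ) := by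
  intro n
  induction n using Nat.strong_induction_on with
  | _ n ih =>
    match n with
    | 0 => simp
    | 1 => norm_num
    | (m+2) =>
      rw [Finset.sum_range_succ, Finset.sum_range_succ']
      have h1 : ∀ k ∈ Finset.range m,
          |2*(((k+1:ℕ):ℤ)+1) - (((m+2:ℕ):ℤ)+1)| = |2*((k:ℤ)+1) - ((m:ℤ)+1)| := by
        intro k _
        congr 1
        push_cast
        ring
      rw [Finset.sum_congr rfl h1, ih m (by omega)]
      have h2 : |2*(((0:ℕ):ℤ)+1) - (((m+2:ℕ):ℤ)+1)| = (m:ℤ)+1 := by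
        push_cast
        rw [abs_of_nonpos (by linarith)]
        ring
      have h3 : |2*(((m+1:ℕ):ℤ)+1) - (((m+2:ℕ):ℤ)+1)| = (m:ℤ)+1 := by
        push_cast
        rw [abs_of_nonneg (by linarith)]
        ring
      rw [h2, h3]
      have h4 : ((m+2)^2/2 : ℕ) = (m^2/2 : ℕ) + (2*m+2) := by
        have : (m+2)^2 = m^2 + (2*m+2)*2 := by ring
        rw [this, Nat.add_mul_div_right _ _ (by norm_num)]
      rw [h4]
      push_cast
      ring

/-- Reindexing a sum over `Icc (1:ℤ) N` by `range N`. -/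
lemma chatterjee_icc_sum (N : ℕ) (f : ℤ → ℤ) :
    ∑ v ∈ Finset.Icc (1:ℤ) (N:ℤ), f v = ∑ k ∈ Finset.range N, f ((k:ℤ)+1) := by
  refine Finset.sum_nbij' (i := fun v => (v-1).toNat) (j := fun k => (k:ℤ)+1) ?_ ?_ ?_ ?_ ?_
  · intro v hv; simp only [Finset.mem_Icc] at hv; simp only [Finset.mem_range]; omega
  · intro k hk; simp only [Finset.mem_range] at hk; simp only [Finset.mem_Icc]; omega
  · intro v hv; simp only [Finset.mem_Icc] at hv; omega
  · intro k hk; simp only [Finset.mem_range] at hk; omega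
  · intro v hv; simp only [Finset.mem_Icc] at hv
    congr 1; omega

/-- Transporting a sum along the permutation. -/
lemma chatterjee_perm_sum (N : ℕ) (r : ℕ → ℤ) (f : ℤ → ℤ)
    (hperm : Set.BijOn r (Finset.range N : Set ℕ) (Finset.Icc (1 : ℤ) (N : ℤ) : Set ℤ)) :
    ∑ i ∈ Finset.range N, f (r i) = ∑ v ∈ Finset.Icc (1:ℤ) (N:ℤ), f v := by
  apply Finset.sum_bij (fun i _ => r i)
  · intro i hi; exact_mod_cast hperm.mapsTo (by exact_mod_cast hi)
  · intro i hi j hj h; exact hperm.injOn (by exact_mod_cast hi) (by exact_mod_cast hj) h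
  · intro v hv
    obtain ⟨i, hi, hri⟩ := hperm.surjOn (by exact_mod_cast hv)
    exact ⟨i, by exact_mod_cast hi, hri⟩
  · intro i hi; rfl

/-- for any permutation `(r_1, …, r_N)` of `(1, …, N)` with `N ≥ 2`,
the total variation `Σ_{j=1}^{N−1} |r_{j+1} − r_j|` lies in `[N−1, ⌊N²/2⌋ − 1]`,
and consequently `ξ̂_N ∈ [1 − 3(⌊N²/2⌋−1)/(N²−1), (N−2)/(N+1)]`. -/
theorem chatterjee_total_variation_bounds (N : ℕ) (hN : 2 ≤ N) (r : ℕ → ℤ)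
    (hperm : Set.BijOn r (Finset.range N : Set ℕ) (Finset.Icc (1 : ℤ) (N : ℤ) : Set ℤ)) :
    ((N : ℤ) - 1 ≤ ∑ j ∈ Finset.range (N - 1), |r (j + 1) - r j| ∧
      ∑ j ∈ Finset.range (N - 1), |r (j + 1) - r j| ≤ (N ^ 2 / 2 : ℕ) - 1) ∧
    (1 - 3 * (((N ^ 2 / 2 : ℕ) : ℝ) - 1) / ((N : ℝ) ^ 2 - 1) ≤ chatterjee N r ∧
      chatterjee N r ≤ ((N : ℝ) - 2) / ((N : ℝ) + 1)) := by
  set T := ∑ j ∈ Finset.range (N - 1), |r (j + 1) - r j| with hTdef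
  have hN1 : N - 1 + 1 = N := by omega
  -- any |r b - r a| with a, b < N is at most T
  have hdiff : ∀ a b : ℕ, a < N → b < N → |r b - r a| ≤ T := by
    have key : ∀ a b : ℕ, a ≤ b → b < N → |r b - r a| ≤ T := by
      intro a b hab hb
      have htel : ∑ j ∈ Finset.Ico a b, (r (j+1) - r j) = r b - r a := by
        rw [Finset.sum_Ico_eq_sub _ hab, Finset.sum_range_sub, Finset.sum_range_sub]
        ring
      calc |r b - r a| = |∑ j ∈ Finset.Ico a b, (r (j+1) - r j)| := by rw [htel]
        _ ≤ ∑ j ∈ Finset.Ico a b, |r (j+1) - r j| := Finset.abs_sum_le_sum_abs _ _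
        _ ≤ T := by
            apply Finset.sum_le_sum_of_subset_of_nonneg
            · intro j hj
              simp only [Finset.mem_Ico] at hj
              simp only [Finset.mem_range]
              omega
            · intro j _ _; exact abs_nonneg _
    intro a b ha hb
    rcases le_total a b with h | h
    · exact key a b h hb
    · rw [abs_sub_comm]; exact key b a h ha
  -- lower bound
  have hlow : (N : ℤ) - 1 ≤ T := by
    obtain ⟨a, ha, hra⟩ := hperm.surjOn (show (1:ℤ) ∈ (Finset.Icc (1:ℤ) (N:ℤ) : Set ℤ) by
      simp only [Finset.coe_Icc, Set.mem_Icc]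
      refine ⟨le_refl _, ?_⟩
      exact_mod_cast Nat.one_le_of_lt hN)
    obtain ⟨b, hb, hrb⟩ := hperm.surjOn (show (N:ℤ) ∈ (Finset.Icc (1:ℤ) (N:ℤ) : Set ℤ) by
      simp only [Finset.coe_Icc, Set.mem_Icc]
      refine ⟨?_, le_refl _⟩
      exact_mod_cast Nat.one_le_of_lt hN)
    have haN : a < N := by simpa using ha
    have hbN : b < N := by simpa using hb
    have := hdiff a b haN hbN
    rw [hra, hrb] at this
    have habs : |(N:ℤ) - 1| = (N:ℤ) - 1 := abs_of_nonneg (by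
      have : (2:ℤ) ≤ (N:ℤ) := by exact_mod_cast hN
      linarith)
    linarith [habs ▸ this]
  -- upper bound
  have hupper : T ≤ ((N^2/2 : ℕ) : ℤ) - 1 := by
    set A : ℕ → ℤ := fun i => |2 * r i - ((N:ℤ)+1)| with hA
    set S := ∑ i ∈ Finset.range N, A i with hS
    -- per-edge bound summed
    have step1 : 2 * T ≤ ∑ j ∈ Finset.range (N-1), (A j + A (j+1)) := by
      rw [hTdef, Finset.mul_sum]
      apply Finset.sum_le_sum
      intro j _
      have he : 2 * |r (j+1) - r j| = |(2 * r (j+1) - ((N:ℤ)+1)) - (2 * r j - ((N:ℤ)+1))| := by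
        rw [show (2:ℤ) * |r (j+1) - r j| = |2 * (r (j+1) - r j)| by rw [abs_mul, abs_two]]
        congr 1
        ring
      rw [he, add_comm (A j)]
      exact abs_sub _ _
    have e1 : ∑ j ∈ Finset.range (N-1), A (j+1) = S - A 0 := by
      have := Finset.sum_range_succ' A (N-1)
      rw [hN1] at this
      rw [hS, this]
      ring
    have e2 : ∑ j ∈ Finset.range (N-1), A j = S - A (N-1) := by
      have := Finset.sum_range_succ A (N-1)
      rw [hN1] at this
      rw [hS, this]
      ring
    have step2 : ∑ j ∈ Finset.range (N-1), (A j + A (j+1)) = 2 * S - A 0 - A (N-1) := by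
      rw [Finset.sum_add_distrib, e1, e2]
      ring
    -- the two endpoints contribute at least 2
    have step3 : 2 ≤ A 0 + A (N-1) := by
      have hne : r 0 ≠ r (N-1) := by
        intro h
        have h0 : (0:ℕ) ∈ (Finset.range N : Set ℕ) := by
          simp only [Finset.coe_range, Set.mem_Iio]; omega
        have h1 : (N-1:ℕ) ∈ (Finset.range N : Set ℕ) := by
          simp only [Finset.coe_range, Set.mem_Iio]; omega
        have := hperm.injOn h0 h1 h
        omega
      have h2 : (2:ℤ) ≤ 2 * |r 0 - r (N-1)| := by
        have : 1 ≤ |r 0 - r (N-1)| := Int.one_le_abs (sub_ne_zero_of_ne hne)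
        linarith
      have h3 : 2 * |r 0 - r (N-1)| = |(2 * r 0 - ((N:ℤ)+1)) - (2 * r (N-1) - ((N:ℤ)+1))| := by
        rw [show (2:ℤ) * |r 0 - r (N-1)| = |2 * (r 0 - r (N-1))| by rw [abs_mul, abs_two]]
        congr 1
        ring
      have h4 : |(2 * r 0 - ((N:ℤ)+1)) - (2 * r (N-1) - ((N:ℤ)+1))| ≤ A 0 + A (N-1) :=
        abs_sub _ _
      linarith [h3 ▸ h2]
    -- compute S
    have hSval : S = ((N^2/2 : ℕ) : ℤ) := by
      rw [hS]
      have := chatterjee_perm_sum N r (fun v => |2 * v - ((N:ℤ)+1)|) hperm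
      rw [hA]
      rw [this, chatterjee_icc_sum]
      have : ∀ k ∈ Finset.range N, |2 * ((k:ℤ)+1) - ((N:ℤ)+1)| = |2*((k:ℤ)+1) - ((N:ℤ)+1)| :=
        fun k _ => rfl
      exact chatterjee_keySum N
    linarith [step1, step2, step3, hSval]
  refine ⟨⟨hlow, hupper⟩, ?_, ?_⟩
  · -- real lower bound
    have hD : (0:ℝ) < (N : ℝ)^2 - 1 := by
      have h2 : (2:ℝ) ≤ (N:ℝ) := by exact_mod_cast hN
      nlinarith
    have hTle : (T:ℝ) ≤ ((N ^ 2 / 2 : ℕ) : ℝ) - 1 := by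
      have := hupper
      push_cast at this ⊢
      exact_mod_cast this
    rw [chatterjee]
    gcongr
  · -- real upper bound
    have hD : (0:ℝ) < (N : ℝ)^2 - 1 := by
      have h2 : (2:ℝ) ≤ (N:ℝ) := by exact_mod_cast hN
      nlinarith
    have h2 : (2:ℝ) ≤ (N:ℝ) := by exact_mod_cast hN
    have hTge : ((N:ℝ) - 1) ≤ (T:ℝ) := by exact_mod_cast hlow
    rw [chatterjee]
    have hrw : 1 - 3 * (T:ℝ) / ((N:ℝ)^2 - 1) = (((N:ℝ)^2 - 1) - 3*T) / ((N:ℝ)^2 - 1) := by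
      field_simp
    have hrw2 : ((N:ℝ) - 2) / ((N:ℝ) + 1) = (((N:ℝ)-2)*((N:ℝ)-1)) / ((N:ℝ)^2 - 1) := by
      rw [div_eq_div_iff (by linarith : ((N:ℝ)+1) ≠ 0) hD.ne']
      ring
    rw [hrw, hrw2, div_le_div_iff₀ hD hD]
    nlinarith
end
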